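/- Let S = S(2,(m_1,m_2)) be the special algebra over a field of characteristic 2 with (m_1,m_2) ≠ (1,1). Then the derived subalgebra S' has codimension exactly 1 in S; in particular, the element z_{2^{m_1}-2, 2^{m_2}-2} does not lie in S'. -/

import Mathlib

/-!
Let `z_top = z_{2^{m₁}-2, 2^{m₂}-2}` and let `M` be the span of all the other basis vectors.
Every bracket of two basis vectors is a multiple of a basis vector, and `z_top` can only arise
as `[z_{ij}, z_{kl}]` with `i + k = 2^{m₁}-2`, `j + l = 2^{m₂}-2`; there the coefficient
`γ_{ijkl}` vanishes, because `C(2^m - 1, t)` is odd for every `t ≤ 2^m - 1`. Hence `S' ⊆ M`.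
Conversely `x_0` and `y_0` act as lowering operators on the `z_{ij}`, so every basis vector other
than `z_top` is a bracket and `M ⊆ S'`. Finally the basis vectors are as many as `dim S`, so they
are linearly independent: `z_top ∉ M` and `dim M = dim S - 1`.
-/

open Submodule Set

/-- `γ_{ijkl} = C(i+k+1,i+1)(C(j+l,j) + C(j+l,j-1)) - C(i+k+1,i)(C(j+l,j+1) + C(j+l,j))`,
with the convention `C(n,-1) = 0`. -/
def sGamma {F : Type*} [Field F] (i j k l : ℕ) : F :=
  (Nat.choose (i + k + 1) (i + 1) : F) *
      ((Nat.choose (j + l) j : F) +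
        (if j = 0 then 0 else (Nat.choose (j + l) (j - 1) : F))) -
    (Nat.choose (i + k + 1) i : F) *
      ((Nat.choose (j + l) (j + 1) : F) + (Nat.choose (j + l) j : F))

theorem Nat.odd_choose_of_add_one_eq_two_pow {n m t : ℕ} (hn : n + 1 = 2 ^ m) (ht : t ≤ n) :
    Odd (n.choose t) := by
  induction t with
  | zero => simp
  | succ t ih =>
    have heven : Even ((n + 1).choose (t + 1)) := by
      rw [hn, even_iff_two_dvd]
      exact Nat.prime_two.dvd_choose_pow t.succ_ne_zero (by omega)
    rw [Nat.choose_succ_succ', Nat.even_add] at heven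
    exact Nat.not_even_iff_odd.mp fun h => Nat.not_even_iff_odd.mpr (ih (by omega)) (heven.mpr h)

theorem cast_choose_add_cast_choose_succ_eq_one {R : Type*} [Ring R] [CharP R 2] {n m t : ℕ}
    (hn : n + 2 = 2 ^ m) (ht : t ≤ n) : (n.choose t : R) + n.choose (t + 1) = 1 := by
  rw [← Nat.cast_add, ← Nat.choose_succ_succ']
  exact natCast_eq_one_of_odd_of_two_eq_zero
    (Nat.odd_choose_of_add_one_eq_two_pow (by omega) (by omega)) CharTwo.two_eq_zero

theorem sGamma_eq_zero {F : Type*} [Field F] [CharP F 2] {m1 m2 i j k l : ℕ}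
    (hik : i + k + 2 = 2 ^ m1) (hjl : j + l + 2 = 2 ^ m2) : sGamma (F := F) i j k l = 0 := by
  have hchoose (t : ℕ) (ht : t ≤ i + k + 1) : ((i + k + 1).choose t : F) = 1 :=
    natCast_eq_one_of_odd_of_two_eq_zero
      (Nat.odd_choose_of_add_one_eq_two_pow (by omega) ht) CharTwo.two_eq_zero
  have hnext (t : ℕ) (ht : t ≤ j + l) : ((j + l).choose t : F) + (j + l).choose (t + 1) = 1 :=
    cast_choose_add_cast_choose_succ_eq_one hjl ht
  rw [sGamma, hchoose i (by omega), hchoose (i + 1) (by omega), one_mul, one_mul]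
  have hjN : j ≤ j + l := Nat.le_add_right j l
  generalize j + l = N at hnext hjN ⊢
  rcases j with _ | j
  · have h01 := hnext 0 hjN
    simp only [if_pos, Nat.choose_zero_right, Nat.cast_one] at h01 ⊢
    linear_combination -h01
  · rw [if_neg j.succ_ne_zero, Nat.add_sub_cancel]
    linear_combination hnext j (by omega) - hnext (j + 1) hjN

theorem LieAlgebra.lie_mem_derivedSeries_one {R L : Type*} [CommRing R] [LieRing L]
    [LieAlgebra R L] (a b : L) : ⁅a, b⁆ ∈ derivedSeries R L 1 := by
  change ⁅a, b⁆ ∈ (derivedSeries R L 1 : Submodule R L)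
  rw [coe_derivedSeries_one_eq]
  exact subset_span ⟨a, b, rfl⟩

theorem LieAlgebra.derivedSeries_one_le_of_lie_mem {R L : Type*} [CommRing R] [LieRing L]
    [LieAlgebra R L] {s : Set L} (hs : span R s = ⊤) {M : Submodule R L}
    (h : ∀ u ∈ s, ∀ v ∈ s, ⁅u, v⁆ ∈ M) : (derivedSeries R L 1 : Submodule R L) ≤ M := by
  rw [coe_derivedSeries_one_eq, span_le]
  rintro _ ⟨a, b, rfl⟩
  have ha : a ∈ span R s := hs ▸ mem_top
  have hb : b ∈ span R s := hs ▸ mem_top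
  induction ha, hb using span_induction₂ with
  | mem_mem u v hu hv => exact h u hu v hv
  | zero_left v => simp
  | zero_right u => simp
  | add_left u v w _ _ _ huw hvw => rw [add_lie]; exact add_mem huw hvw
  | add_right u v w _ _ _ huv huw => rw [lie_add]; exact add_mem huv huw
  | smul_left r u v _ _ huv => rw [smul_lie]; exact M.smul_mem r huv
  | smul_right r u v _ _ huv => rw [lie_smul]; exact M.smul_mem r huv

theorem LinearIndependent.finrank_span_image_compl_singleton {K V ι : Type*} [DivisionRing K]
    [AddCommGroup V] [Module K V] [Fintype ι] {b : ι → V} (hb : LinearIndependent K b) (a : ι) :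
    Module.finrank K (span K (b '' {a}ᶜ)) = Fintype.card ι - 1 := by
  classical
  rw [← Subtype.range_coe (s := ({a}ᶜ : Set ι)), ← range_comp,
    finrank_span_eq_card (hb.comp _ Subtype.val_injective)]
  simp

/-- The relations of `S(2,(m₁,m₂))` among `x_j, y_i, z_{ij}` (`0 ≤ i ≤ n1`, `0 ≤ j ≤ n2`, with
`n_k = 2^{m_k} - 2` in the paper), for families extended by zero beyond these ranges. -/
structure IsSpecialFamily (F : Type*) {L : Type*} [Field F] [LieRing L] [LieAlgebra F L]
    (n1 n2 : ℕ) (x y : ℕ → L) (z : ℕ → ℕ → L) : Prop where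
  x_eq_zero : ∀ j, n2 < j → x j = 0
  y_eq_zero : ∀ i, n1 < i → y i = 0
  z_eq_zero : ∀ i j, n1 < i ∨ n2 < j → z i j = 0
  lie_x_x : ∀ i j, ⁅x i, x j⁆ = 0
  lie_y_y : ∀ i j, ⁅y i, y j⁆ = 0
  lie_z_z : ∀ i j k l, i ≤ n1 → k ≤ n1 → j ≤ n2 → l ≤ n2 →
    ⁅z i j, z k l⁆ = sGamma (F := F) i j k l • z (i + k) (j + l)
  lie_x_zero_y : ∀ i, 1 ≤ i → i ≤ n1 → ⁅x 0, y i⁆ = y (i - 1)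
  lie_x_zero_y_zero : ⁅x 0, y 0⁆ = 0
  lie_y_zero_x : ∀ j, 1 ≤ j → j ≤ n2 → ⁅y 0, x j⁆ = x (j - 1)
  lie_x_y : ∀ i j, 1 ≤ i → i ≤ n2 → 1 ≤ j → j ≤ n1 → ⁅x i, y j⁆ = z (j - 1) (i - 1)
  lie_x_z_zero : ∀ i k, i ≤ n2 → k ≤ n2 →
    ⁅x i, z 0 k⁆ = (Nat.choose (i + k + 1) i : F) • x (i + k)
  lie_x_z : ∀ i j k, i ≤ n2 → k ≤ n2 → 1 ≤ j → j ≤ n1 →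
    ⁅x i, z j k⁆ = (Nat.choose (i + k + 1) i : F) • z (j - 1) (i + k)
  lie_y_z_zero : ∀ i j, i ≤ n1 → j ≤ n1 →
    ⁅y i, z j 0⁆ = (Nat.choose (i + j + 1) i : F) • y (i + j)
  lie_y_z : ∀ i j k, i ≤ n1 → j ≤ n1 → 1 ≤ k → k ≤ n2 →
    ⁅y i, z j k⁆ = (Nat.choose (i + j + 1) i : F) • z (i + j) (k - 1)

abbrev SpecialIndex (n1 n2 : ℕ) : Type :=
  Fin (n2 + 1) ⊕ Fin (n1 + 1) ⊕ Fin (n1 + 1) × Fin (n2 + 1)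

namespace SpecialIndex

def top (n1 n2 : ℕ) : SpecialIndex n1 n2 := .inr (.inr (Fin.last n1, Fin.last n2))

theorem card_eq_two_pow_sub_one {n1 n2 m1 m2 : ℕ} (hn1 : n1 + 2 = 2 ^ m1)
    (hn2 : n2 + 2 = 2 ^ m2) : Fintype.card (SpecialIndex n1 n2) = 2 ^ (m1 + m2) - 1 := by
  have hprod : (n1 + 2) * (n2 + 2) = 2 ^ (m1 + m2) := by rw [pow_add, hn1, hn2]
  simp only [Fintype.card_sum, Fintype.card_prod, Fintype.card_fin]
  rw [← hprod]
  ring_nf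
  omega

end SpecialIndex

section

variable {F L : Type*} [Field F] [LieRing L] [LieAlgebra F L]

def specialFamily (n1 n2 : ℕ) (x y : ℕ → L) (z : ℕ → ℕ → L) : SpecialIndex n1 n2 → L
  | .inl j => x j
  | .inr (.inl i) => y i
  | .inr (.inr (i, j)) => z i j

variable (F) in
def lowerSpan (n1 n2 : ℕ) (x y : ℕ → L) (z : ℕ → ℕ → L) : Submodule F L :=
  span F (specialFamily n1 n2 x y z '' {SpecialIndex.top n1 n2}ᶜ)

end

namespace IsSpecialFamily

variable {F L : Type*} [Field F] [LieRing L] [LieAlgebra F L] {n1 n2 : ℕ}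
  {x y : ℕ → L} {z : ℕ → ℕ → L}

theorem lie_x_zero_z_zero (hS : IsSpecialFamily F n1 n2 x y z) {j : ℕ} (hj : j ≤ n2) :
    ⁅x 0, z 0 j⁆ = x j := by
  rw [hS.lie_x_z_zero 0 j (Nat.zero_le _) hj, Nat.choose_zero_right, Nat.cast_one, one_smul,
    zero_add]

theorem lie_y_zero_z_zero (hS : IsSpecialFamily F n1 n2 x y z) {i : ℕ} (hi : i ≤ n1) :
    ⁅y 0, z i 0⁆ = y i := by
  rw [hS.lie_y_z_zero 0 i (Nat.zero_le _) hi, Nat.choose_zero_right, Nat.cast_one, one_smul,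
    zero_add]

theorem lie_x_zero_z (hS : IsSpecialFamily F n1 n2 x y z) {i j : ℕ} (hi : i < n1)
    (hj : j ≤ n2) : ⁅x 0, z (i + 1) j⁆ = z i j := by
  rw [hS.lie_x_z 0 (i + 1) j (Nat.zero_le _) hj (by omega) hi, Nat.choose_zero_right,
    Nat.cast_one, one_smul, zero_add, Nat.add_sub_cancel]

theorem lie_y_zero_z (hS : IsSpecialFamily F n1 n2 x y z) {i j : ℕ} (hi : i ≤ n1)
    (hj : j < n2) : ⁅y 0, z i (j + 1)⁆ = z i j := by
  rw [hS.lie_y_z 0 i (j + 1) (Nat.zero_le _) hi (by omega) hj, Nat.choose_zero_right,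
    Nat.cast_one, one_smul, zero_add, Nat.add_sub_cancel]

theorem x_mem_lowerSpan (hS : IsSpecialFamily F n1 n2 x y z) (j : ℕ) :
    x j ∈ lowerSpan F n1 n2 x y z := by
  by_cases hj : j ≤ n2
  · exact subset_span ⟨.inl ⟨j, by omega⟩, by simp [SpecialIndex.top], rfl⟩
  · rw [hS.x_eq_zero j (by omega)]; exact zero_mem _

theorem y_mem_lowerSpan (hS : IsSpecialFamily F n1 n2 x y z) (i : ℕ) :
    y i ∈ lowerSpan F n1 n2 x y z := by
  by_cases hi : i ≤ n1
  · exact subset_span ⟨.inr (.inl ⟨i, by omega⟩), by simp [SpecialIndex.top], rfl⟩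
  · rw [hS.y_eq_zero i (by omega)]; exact zero_mem _

theorem z_mem_lowerSpan (hS : IsSpecialFamily F n1 n2 x y z) {i j : ℕ}
    (hij : ¬(i = n1 ∧ j = n2)) : z i j ∈ lowerSpan F n1 n2 x y z := by
  by_cases hle : i ≤ n1 ∧ j ≤ n2
  · exact subset_span ⟨.inr (.inr (⟨i, by omega⟩, ⟨j, by omega⟩)),
      by simpa [SpecialIndex.top, Fin.ext_iff] using hij, rfl⟩
  · rw [hS.z_eq_zero i j (by omega)]; exact zero_mem _

theorem lie_x_y_mem (hS : IsSpecialFamily F n1 n2 x y z) (i j : ℕ) :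
    ⁅x i, y j⁆ ∈ lowerSpan F n1 n2 x y z := by
  by_cases hi : i ≤ n2
  swap
  · rw [hS.x_eq_zero i (by omega), zero_lie]; exact zero_mem _
  by_cases hj : j ≤ n1
  swap
  · rw [hS.y_eq_zero j (by omega), lie_zero]; exact zero_mem _
  rcases i with _ | i <;> rcases j with _ | j
  · rw [hS.lie_x_zero_y_zero]; exact zero_mem _
  · rw [hS.lie_x_zero_y (j + 1) (by omega) hj]; exact hS.y_mem_lowerSpan _
  · rw [← lie_skew, hS.lie_y_zero_x (i + 1) (by omega) hi]; exact neg_mem (hS.x_mem_lowerSpan _)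
  · rw [hS.lie_x_y (i + 1) (j + 1) (by omega) hi (by omega) hj]
    exact hS.z_mem_lowerSpan (by omega)

theorem lie_x_z_mem (hS : IsSpecialFamily F n1 n2 x y z) (i j k : ℕ) :
    ⁅x i, z j k⁆ ∈ lowerSpan F n1 n2 x y z := by
  by_cases hi : i ≤ n2
  swap
  · rw [hS.x_eq_zero i (by omega), zero_lie]; exact zero_mem _
  by_cases hjk : j ≤ n1 ∧ k ≤ n2
  swap
  · rw [hS.z_eq_zero j k (by omega), lie_zero]; exact zero_mem _
  rcases j with _ | j
  · rw [hS.lie_x_z_zero i k hi hjk.2]; exact smul_mem _ _ (hS.x_mem_lowerSpan _)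
  · rw [hS.lie_x_z i (j + 1) k hi hjk.2 (by omega) hjk.1]
    exact smul_mem _ _ (hS.z_mem_lowerSpan (by omega))

theorem lie_y_z_mem (hS : IsSpecialFamily F n1 n2 x y z) (i j k : ℕ) :
    ⁅y i, z j k⁆ ∈ lowerSpan F n1 n2 x y z := by
  by_cases hi : i ≤ n1
  swap
  · rw [hS.y_eq_zero i (by omega), zero_lie]; exact zero_mem _
  by_cases hjk : j ≤ n1 ∧ k ≤ n2
  swap
  · rw [hS.z_eq_zero j k (by omega), lie_zero]; exact zero_mem _
  rcases k with _ | k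
  · rw [hS.lie_y_z_zero i j hi hjk.1]; exact smul_mem _ _ (hS.y_mem_lowerSpan _)
  · rw [hS.lie_y_z i j (k + 1) hi hjk.1 (by omega) hjk.2]
    exact smul_mem _ _ (hS.z_mem_lowerSpan (by omega))

theorem lie_z_z_mem [CharP F 2] {m1 m2 : ℕ} (hS : IsSpecialFamily F n1 n2 x y z)
    (hn1 : n1 + 2 = 2 ^ m1) (hn2 : n2 + 2 = 2 ^ m2) (i j k l : ℕ) :
    ⁅z i j, z k l⁆ ∈ lowerSpan F n1 n2 x y z := by
  by_cases hij : i ≤ n1 ∧ j ≤ n2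
  swap
  · rw [hS.z_eq_zero i j (by omega), zero_lie]; exact zero_mem _
  by_cases hkl : k ≤ n1 ∧ l ≤ n2
  swap
  · rw [hS.z_eq_zero k l (by omega), lie_zero]; exact zero_mem _
  rw [hS.lie_z_z i j k l hij.1 hkl.1 hij.2 hkl.2]
  by_cases htop : i + k = n1 ∧ j + l = n2
  · rw [sGamma_eq_zero (by omega : i + k + 2 = 2 ^ m1) (by omega : j + l + 2 = 2 ^ m2), zero_smul]
    exact zero_mem _
  · exact smul_mem _ _ (hS.z_mem_lowerSpan htop)

theorem lie_mem_lowerSpan [CharP F 2] {m1 m2 : ℕ} (hS : IsSpecialFamily F n1 n2 x y z)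
    (hn1 : n1 + 2 = 2 ^ m1) (hn2 : n2 + 2 = 2 ^ m2) {u v : L}
    (hu : u ∈ range (specialFamily n1 n2 x y z)) (hv : v ∈ range (specialFamily n1 n2 x y z)) :
    ⁅u, v⁆ ∈ lowerSpan F n1 n2 x y z := by
  obtain ⟨(j | i | ⟨i, j⟩), rfl⟩ := hu <;> obtain ⟨(l | k | ⟨k, l⟩), rfl⟩ := hv <;>
    simp only [specialFamily]
  · rw [hS.lie_x_x]; exact zero_mem _
  · exact hS.lie_x_y_mem _ _
  · exact hS.lie_x_z_mem _ _ _
  · rw [← lie_skew]; exact neg_mem (hS.lie_x_y_mem _ _)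
  · rw [hS.lie_y_y]; exact zero_mem _
  · exact hS.lie_y_z_mem _ _ _
  · rw [← lie_skew]; exact neg_mem (hS.lie_x_z_mem _ _ _)
  · rw [← lie_skew]; exact neg_mem (hS.lie_y_z_mem _ _ _)
  · exact hS.lie_z_z_mem hn1 hn2 _ _ _ _

theorem lowerSpan_le_derivedSeries_one (hS : IsSpecialFamily F n1 n2 x y z) :
    lowerSpan F n1 n2 x y z ≤ LieAlgebra.derivedSeries F L 1 := by
  rw [lowerSpan, span_le]
  rintro _ ⟨(j | i | ⟨i, j⟩), htop, rfl⟩ <;> simp only [specialFamily, SetLike.mem_coe]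
  · exact hS.lie_x_zero_z_zero j.is_le ▸ LieAlgebra.lie_mem_derivedSeries_one _ _
  · exact hS.lie_y_zero_z_zero i.is_le ▸ LieAlgebra.lie_mem_derivedSeries_one _ _
  · have hij : (i : ℕ) < n1 ∨ (j : ℕ) < n2 := by
      simp only [SpecialIndex.top, mem_compl_iff, mem_singleton_iff, Sum.inr.injEq,
        Prod.mk.injEq, Fin.ext_iff, Fin.val_last] at htop
      omega
    rcases hij with hi | hj
    · exact hS.lie_x_zero_z hi j.is_le ▸ LieAlgebra.lie_mem_derivedSeries_one _ _
    · exact hS.lie_y_zero_z i.is_le hj ▸ LieAlgebra.lie_mem_derivedSeries_one _ _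

theorem derivedSeries_one_eq_lowerSpan [CharP F 2] {m1 m2 : ℕ}
    (hS : IsSpecialFamily F n1 n2 x y z) (hn1 : n1 + 2 = 2 ^ m1) (hn2 : n2 + 2 = 2 ^ m2)
    (hspan : span F (range (specialFamily n1 n2 x y z)) = ⊤) :
    (LieAlgebra.derivedSeries F L 1 : Submodule F L) = lowerSpan F n1 n2 x y z :=
  le_antisymm
    (LieAlgebra.derivedSeries_one_le_of_lie_mem hspan fun _ hu _ hv =>
      hS.lie_mem_lowerSpan hn1 hn2 hu hv)
    hS.lowerSpan_le_derivedSeries_one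

theorem span_range_specialFamily (hS : IsSpecialFamily F n1 n2 x y z)
    (hspan : span F (range x ∪ range y ∪ {w | ∃ i j, w = z i j}) = ⊤) :
    span F (range (specialFamily n1 n2 x y z)) = ⊤ := by
  have hlow : lowerSpan F n1 n2 x y z ≤ span F (range (specialFamily n1 n2 x y z)) :=
    span_mono (image_subset_range _ _)
  rw [eq_top_iff, ← hspan, span_le]
  rintro _ ((⟨j, rfl⟩ | ⟨i, rfl⟩) | ⟨i, j, rfl⟩)
  · exact hlow (hS.x_mem_lowerSpan j)
  · exact hlow (hS.y_mem_lowerSpan i)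
  · by_cases htop : i = n1 ∧ j = n2
    · obtain ⟨rfl, rfl⟩ := htop
      exact subset_span ⟨SpecialIndex.top _ _, rfl⟩
    · exact hlow (hS.z_mem_lowerSpan htop)

end IsSpecialFamily

theorem special_derived_codim_one_general
    (F : Type*) [Field F] [CharP F 2] (m1 m2 : ℕ)
    (L : Type*) [LieRing L] [LieAlgebra F L]
    (x y : ℕ → L) (z : ℕ → ℕ → L)
    -- basis elements, extended by zero outside their index ranges:
    (hx0 : ∀ j, 2 ^ m2 - 2 < j → x j = 0)
    (hy0 : ∀ i, 2 ^ m1 - 2 < i → y i = 0)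
    (hz0 : ∀ i j, 2 ^ m1 - 2 < i ∨ 2 ^ m2 - 2 < j → z i j = 0)
    (hspan : Submodule.span F
      (Set.range x ∪ Set.range y ∪ {w | ∃ i j, w = z i j}) = ⊤)
    (hdim : Module.finrank F L = 2 ^ (m1 + m2) - 1)
    -- the bracket relations of S(2,(m1,m2)):
    (hxx : ∀ i j, ⁅x i, x j⁆ = 0)
    (hyy : ∀ i j, ⁅y i, y j⁆ = 0)
    (hzz : ∀ i j k l, i ≤ 2 ^ m1 - 2 → k ≤ 2 ^ m1 - 2 → j ≤ 2 ^ m2 - 2 → l ≤ 2 ^ m2 - 2 →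
      ⁅z i j, z k l⁆ = sGamma (F := F) i j k l • z (i + k) (j + l))
    (hx0y : ∀ i, 1 ≤ i → i ≤ 2 ^ m1 - 2 → ⁅x 0, y i⁆ = y (i - 1))
    (hx0y0 : ⁅x 0, y 0⁆ = 0)
    (hy0x : ∀ j, 1 ≤ j → j ≤ 2 ^ m2 - 2 → ⁅y 0, x j⁆ = x (j - 1))
    (hxy : ∀ i j, 1 ≤ i → i ≤ 2 ^ m2 - 2 → 1 ≤ j → j ≤ 2 ^ m1 - 2 →
      ⁅x i, y j⁆ = z (j - 1) (i - 1))
    (hxz0 : ∀ i k, i ≤ 2 ^ m2 - 2 → k ≤ 2 ^ m2 - 2 →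
      ⁅x i, z 0 k⁆ = (Nat.choose (i + k + 1) i : F) • x (i + k))
    (hxz : ∀ i j k, i ≤ 2 ^ m2 - 2 → k ≤ 2 ^ m2 - 2 → 1 ≤ j → j ≤ 2 ^ m1 - 2 →
      ⁅x i, z j k⁆ = (Nat.choose (i + k + 1) i : F) • z (j - 1) (i + k))
    (hyz0 : ∀ i j, i ≤ 2 ^ m1 - 2 → j ≤ 2 ^ m1 - 2 →
      ⁅y i, z j 0⁆ = (Nat.choose (i + j + 1) i : F) • y (i + j))
    (hyz : ∀ i j k, i ≤ 2 ^ m1 - 2 → j ≤ 2 ^ m1 - 2 → 1 ≤ k → k ≤ 2 ^ m2 - 2 →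
      ⁅y i, z j k⁆ = (Nat.choose (i + j + 1) i : F) • z (i + j) (k - 1))
    (hm1 : 1 ≤ m1) (hm2 : 1 ≤ m2) :
    z (2 ^ m1 - 2) (2 ^ m2 - 2) ∉ LieAlgebra.derivedSeries F L 1 ∧
      Module.finrank F (LieAlgebra.derivedSeries F L 1) = 2 ^ (m1 + m2) - 2 := by
  set n1 := 2 ^ m1 - 2
  set n2 := 2 ^ m2 - 2
  have hn1 : n1 + 2 = 2 ^ m1 := Nat.sub_add_cancel (Nat.le_self_pow (by omega) 2)
  have hn2 : n2 + 2 = 2 ^ m2 := Nat.sub_add_cancel (Nat.le_self_pow (by omega) 2)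
  have hS : IsSpecialFamily F n1 n2 x y z :=
    ⟨hx0, hy0, hz0, hxx, hyy, hzz, hx0y, hx0y0, hy0x, hxy, hxz0, hxz, hyz0, hyz⟩
  have hspan' := hS.span_range_specialFamily hspan
  have hcard := SpecialIndex.card_eq_two_pow_sub_one hn1 hn2
  have hli := linearIndependent_of_top_le_span_of_card_eq_finrank hspan'.ge (hcard.trans hdim.symm)
  have hderived := hS.derivedSeries_one_eq_lowerSpan hn1 hn2 hspan'
  refine ⟨fun hz => hli.notMem_span_image (s := {SpecialIndex.top n1 n2}ᶜ)
    (notMem_compl_iff.mpr rfl) ?_, ?_⟩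
  · rw [← lowerSpan, ← hderived]
    exact hz
  · change Module.finrank F (LieAlgebra.derivedSeries F L 1 : Submodule F L) = _
    rw [hderived, lowerSpan, hli.finrank_span_image_compl_singleton, hcard]
    omega

/-- For the special algebra `S = S(2,(m₁,m₂))` over a field of
characteristic 2 with `(m₁,m₂) ≠ (1,1)`, the derived subalgebra `S'` has
codimension exactly 1 in `S`; in particular `z_{2^{m₁}-2, 2^{m₂}-2} ∉ S'`. -/
theorem special_derived_codim_one
    (F : Type*) [Field F] [CharP F 2] (m1 m2 : ℕ)
    (L : Type*) [LieRing L] [LieAlgebra F L]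
    (x y : ℕ → L) (z : ℕ → ℕ → L)
    -- basis elements, extended by zero outside their index ranges:
    (hx0 : ∀ j, 2 ^ m2 - 2 < j → x j = 0)
    (hy0 : ∀ i, 2 ^ m1 - 2 < i → y i = 0)
    (hz0 : ∀ i j, 2 ^ m1 - 2 < i ∨ 2 ^ m2 - 2 < j → z i j = 0)
    (hspan : Submodule.span F
      (Set.range x ∪ Set.range y ∪ {w | ∃ i j, w = z i j}) = ⊤)
    (hdim : Module.finrank F L = 2 ^ (m1 + m2) - 1)
    -- the bracket relations of S(2,(m1,m2)):
    (hxx : ∀ i j, ⁅x i, x j⁆ = 0)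
    (hyy : ∀ i j, ⁅y i, y j⁆ = 0)
    (hzz : ∀ i j k l, i ≤ 2 ^ m1 - 2 → k ≤ 2 ^ m1 - 2 → j ≤ 2 ^ m2 - 2 → l ≤ 2 ^ m2 - 2 →
      ⁅z i j, z k l⁆ = sGamma (F := F) i j k l • z (i + k) (j + l))
    (hx0y : ∀ i, 1 ≤ i → i ≤ 2 ^ m1 - 2 → ⁅x 0, y i⁆ = y (i - 1))
    (hx0y0 : ⁅x 0, y 0⁆ = 0)
    (hy0x : ∀ j, 1 ≤ j → j ≤ 2 ^ m2 - 2 → ⁅y 0, x j⁆ = x (j - 1))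
    (hy0x0 : ⁅y 0, x 0⁆ = 0)
    (hxy : ∀ i j, 1 ≤ i → i ≤ 2 ^ m2 - 2 → 1 ≤ j → j ≤ 2 ^ m1 - 2 →
      ⁅x i, y j⁆ = z (j - 1) (i - 1))
    (hxz0 : ∀ i k, i ≤ 2 ^ m2 - 2 → k ≤ 2 ^ m2 - 2 →
      ⁅x i, z 0 k⁆ = (Nat.choose (i + k + 1) i : F) • x (i + k))
    (hxz : ∀ i j k, i ≤ 2 ^ m2 - 2 → k ≤ 2 ^ m2 - 2 → 1 ≤ j → j ≤ 2 ^ m1 - 2 →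
      ⁅x i, z j k⁆ = (Nat.choose (i + k + 1) i : F) • z (j - 1) (i + k))
    (hyz0 : ∀ i j, i ≤ 2 ^ m1 - 2 → j ≤ 2 ^ m1 - 2 →
      ⁅y i, z j 0⁆ = (Nat.choose (i + j + 1) i : F) • y (i + j))
    (hyz : ∀ i j k, i ≤ 2 ^ m1 - 2 → j ≤ 2 ^ m1 - 2 → 1 ≤ k → k ≤ 2 ^ m2 - 2 →
      ⁅y i, z j k⁆ = (Nat.choose (i + j + 1) i : F) • z (i + j) (k - 1))
    (hm1 : 1 ≤ m1) (hm2 : 1 ≤ m2) (hne : ¬(m1 = 1 ∧ m2 = 1)) :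
    z (2 ^ m1 - 2) (2 ^ m2 - 2) ∉ LieAlgebra.derivedSeries F L 1 ∧
      Module.finrank F (LieAlgebra.derivedSeries F L 1) = 2 ^ (m1 + m2) - 2 :=
  special_derived_codim_one_general F m1 m2 L x y z hx0 hy0 hz0 hspan hdim hxx hyy hzz hx0y hx0y0
    hy0x hxy hxz0 hxz hyz0 hyz hm1 hm2
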